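/- Let $A$ be a bounded normal operator on a complex Hilbert space $X$ with spectral measure $E_A$, and let $f\in X$ satisfy $\|A^n f\|\le c\alpha^n$ for all $n\in\mathbb{Z}_+$, for some $c,\alpha>0$. Then $E_A(\{\lambda : |\lambda| > \alpha\}) f = 0$, i.e., $f = E_A(\{\lambda : |\lambda|\le\alpha\}) f$. -/

import Mathlib

/-! Since `‖Aⁿ f‖² = ∫ |z|²ⁿ dμ_f`, Chebyshev's inequality gives
`μ_f {|z| ≥ β} ≤ c² (α / β)²ⁿ → 0` for every `β > α`; letting `β ↓ α` yields
`‖E {|z| > α} f‖² = μ_f {|z| > α} = 0`, and additivity of `E` on `{|z| ≤ α} ∪ {|z| > α}`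
gives `f = E {|z| ≤ α} f`. -/

open MeasureTheory

variable {X : Type*} [NormedAddCommGroup X] [InnerProductSpace ℂ X] [CompleteSpace X]

/-- `E` is the projection-valued spectral measure of the bounded (normal) operator `A`
on the complex Hilbert space `X`, and `μ f` is the associated positive Borel measure
`μ f (s) = ⟨E(s) f, f⟩ = ‖E(s) f‖²`. -/
structure IsSpectralMeasureOf (A : X →L[ℂ] X) (E : Set ℂ → X →L[ℂ] X)
    (μ : X → Measure ℂ) : Prop where
  empty : E ∅ = 0
  univ : E Set.univ = ContinuousLinearMap.id ℂ X
  inter : ∀ s t : Set ℂ, MeasurableSet s → MeasurableSet t →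
    E (s ∩ t) = (E s).comp (E t)
  symm : ∀ s : Set ℂ, MeasurableSet s → ∀ f g : X,
    (inner ℂ (E s f) g : ℂ) = inner ℂ f (E s g)
  countably_additive : ∀ s : ℕ → Set ℂ, (∀ n, MeasurableSet (s n)) →
    Pairwise (Function.onFun Disjoint s) → ∀ f : X,
      HasSum (fun n => E (s n) f) (E (⋃ n, s n) f)
  mu_def : ∀ (f : X) (s : Set ℂ), MeasurableSet s →
    μ f s = ENNReal.ofReal (‖E s f‖ ^ 2)
  mu_univ : ∀ f : X, μ f Set.univ = ENNReal.ofReal (‖f‖ ^ 2)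
  inner_A_eq : ∀ f : X, (inner ℂ (A f) f : ℂ) = ∫ z : ℂ, z ∂(μ f)
  norm_pow_eq : ∀ (f : X) (n : ℕ),
    ENNReal.ofReal (‖(A ^ n) f‖ ^ 2) =
      ∫⁻ z : ℂ, ENNReal.ofReal (‖z‖ ^ (2 * n)) ∂(μ f)

open Filter Topology

section MomentBound

variable {Ω : Type*} [MeasurableSpace Ω] {ν : Measure Ω} {g : Ω → ℝ} {C a b : ℝ}

theorem measure_setOf_le_le_of_lintegral_pow_le (hg : AEMeasurable g ν) (hb : 0 < b)
    (h : ∀ n : ℕ, ∫⁻ x, ENNReal.ofReal (g x ^ n) ∂ν ≤ ENNReal.ofReal (C * a ^ n)) (n : ℕ) :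
    ν {x | b ≤ g x} ≤ ENNReal.ofReal (C * (a / b) ^ n) := by
  have hbn : 0 < b ^ n := pow_pos hb n
  have hchebyshev : ENNReal.ofReal (b ^ n) * ν {x | b ≤ g x} ≤ ENNReal.ofReal (C * a ^ n) :=
    calc ENNReal.ofReal (b ^ n) * ν {x | b ≤ g x}
        ≤ ENNReal.ofReal (b ^ n) * ν {x | ENNReal.ofReal (b ^ n) ≤ ENNReal.ofReal (g x ^ n)} :=
          mul_le_mul_right (measure_mono fun x hx =>
            ENNReal.ofReal_le_ofReal (pow_le_pow_left₀ hb.le hx n)) _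
      _ ≤ ∫⁻ x, ENNReal.ofReal (g x ^ n) ∂ν :=
          mul_meas_ge_le_lintegral₀ (hg.pow_const n).ennreal_ofReal _
      _ ≤ ENNReal.ofReal (C * a ^ n) := h n
  rw [div_pow, ← mul_div_assoc, ENNReal.ofReal_div_of_pos hbn,
    ENNReal.le_div_iff_mul_le (Or.inl (ENNReal.ofReal_pos.mpr hbn).ne')
      (Or.inl ENNReal.ofReal_ne_top), mul_comm]
  exact hchebyshev

theorem measure_setOf_le_eq_zero_of_lintegral_pow_le (hg : AEMeasurable g ν) (ha : 0 ≤ a)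
    (hab : a < b) (h : ∀ n : ℕ, ∫⁻ x, ENNReal.ofReal (g x ^ n) ∂ν ≤ ENNReal.ofReal (C * a ^ n)) :
    ν {x | b ≤ g x} = 0 := by
  have hb : 0 < b := ha.trans_lt hab
  have hratio : Tendsto (fun n : ℕ => C * (a / b) ^ n) atTop (𝓝 0) := by
    simpa using (tendsto_pow_atTop_nhds_zero_of_lt_one (div_nonneg ha hb.le)
      ((div_lt_one hb).mpr hab)).const_mul C
  have hbound : Tendsto (fun n : ℕ => ENNReal.ofReal (C * (a / b) ^ n)) atTop (𝓝 0) := by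
    simpa using ENNReal.tendsto_ofReal hratio
  exact le_antisymm (ge_of_tendsto' hbound (measure_setOf_le_le_of_lintegral_pow_le hg hb h)) bot_le

theorem measure_setOf_lt_eq_zero_of_lintegral_pow_le (hg : AEMeasurable g ν) (ha : 0 ≤ a)
    (h : ∀ n : ℕ, ∫⁻ x, ENNReal.ofReal (g x ^ n) ∂ν ≤ ENNReal.ofReal (C * a ^ n)) :
    ν {x | a < g x} = 0 := by
  obtain ⟨u, -, hau, hu⟩ := exists_seq_strictAnti_tendsto a
  refine measure_mono_null (fun x hx => ?_) (measure_iUnion_null fun k =>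
    measure_setOf_le_eq_zero_of_lintegral_pow_le hg ha (hau k) h)
  obtain ⟨k, hk⟩ := (hu.eventually (gt_mem_nhds hx)).exists
  exact Set.mem_iUnion.mpr ⟨k, hk.le⟩

end MomentBound

namespace IsSpectralMeasureOf

variable {H : Type*} [NormedAddCommGroup H] [InnerProductSpace ℂ H]
  {A : H →L[ℂ] H} {E : Set ℂ → H →L[ℂ] H} {μ : H → Measure ℂ}

theorem apply_eq_zero_of_measure_eq_zero (hE : IsSpectralMeasureOf A E μ) {s : Set ℂ}
    (hs : MeasurableSet s) {f : H} (hμ : μ f s = 0) : E s f = 0 := by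
  have h := hE.mu_def f s hs
  rw [hμ, eq_comm, ENNReal.ofReal_eq_zero] at h
  exact norm_eq_zero.mp (pow_eq_zero_iff two_ne_zero |>.mp (le_antisymm h (sq_nonneg _)))

theorem apply_union (hE : IsSpectralMeasureOf A E μ) {s t : Set ℂ} (hs : MeasurableSet s)
    (ht : MeasurableSet t) (hst : Disjoint s t) (f : H) :
    E (s ∪ t) f = E s f + E t f := by
  set u : ℕ → Set ℂ := fun n => if n = 0 then s else if n = 1 then t else ∅ with hu
  have hmeas : ∀ n, MeasurableSet (u n) := by
    intro n
    simp only [hu]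
    split_ifs <;> simp [hs, ht]
  have hdisj : Pairwise (Function.onFun Disjoint u) := by
    refine (pairwise_disjoint_on u).mpr fun m n hmn => ?_
    simp only [hu]
    split_ifs <;> first | omega | simp
  have hunion : (⋃ n, u n) = s ∪ t := by
    ext z
    simp only [Set.mem_iUnion, Set.mem_union, hu]
    refine ⟨fun ⟨n, hn⟩ => ?_, fun hz => hz.elim (fun h => ⟨0, by simpa⟩) fun h => ⟨1, by simpa⟩⟩
    split_ifs at hn <;> simp_all
  have hsum := hE.countably_additive u hmeas hdisj f
  rw [hunion] at hsum
  have hfinite : HasSum (fun n => E (u n) f) (∑ n ∈ Finset.range 2, E (u n) f) :=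
    hasSum_sum_of_ne_finset_zero fun n hn => by
      have : n ≠ 0 ∧ n ≠ 1 := by simp only [Finset.mem_range] at hn; omega
      simp [hu, this, hE.empty]
  simpa [Finset.sum_range_succ, hu] using hsum.unique hfinite

end IsSpectralMeasureOf

theorem spectral_projection_of_exp_type_general (A : X →L[ℂ] X)
    (E : Set ℂ → X →L[ℂ] X) (μ : X → Measure ℂ) (hE : IsSpectralMeasureOf A E μ)
    (f : X) (c α : ℝ) (hα : 0 < α)
    (hf : ∀ n : ℕ, ‖(A ^ n) f‖ ≤ c * α ^ n) :
    E {z : ℂ | α < ‖z‖} f = 0 ∧ f = E {z : ℂ | ‖z‖ ≤ α} f := by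
  have hnorm : Measurable fun z : ℂ => ‖z‖ := continuous_norm.measurable
  have hout : MeasurableSet {z : ℂ | α < ‖z‖} := measurableSet_lt measurable_const hnorm
  have hin : MeasurableSet {z : ℂ | ‖z‖ ≤ α} := measurableSet_le hnorm measurable_const
  have hmoments : ∀ n : ℕ, ∫⁻ z, ENNReal.ofReal ((‖z‖ ^ 2) ^ n) ∂μ f ≤
      ENNReal.ofReal (c ^ 2 * (α ^ 2) ^ n) := fun n =>
    calc ∫⁻ z, ENNReal.ofReal ((‖z‖ ^ 2) ^ n) ∂μ f
        = ENNReal.ofReal (‖(A ^ n) f‖ ^ 2) := by simp_rw [← pow_mul, hE.norm_pow_eq]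
      _ ≤ ENNReal.ofReal (c ^ 2 * (α ^ 2) ^ n) := by
          rw [← pow_mul, mul_comm 2 n, pow_mul, ← mul_pow]
          exact ENNReal.ofReal_le_ofReal (pow_le_pow_left₀ (norm_nonneg _) (hf n) 2)
  have hμ : μ f {z : ℂ | α < ‖z‖} = 0 := by
    simpa only [sq_lt_sq₀ hα.le (norm_nonneg _)] using
      measure_setOf_lt_eq_zero_of_lintegral_pow_le (hnorm.pow_const 2).aemeasurable
        (sq_nonneg α) hmoments
  have hEout : E {z : ℂ | α < ‖z‖} f = 0 := hE.apply_eq_zero_of_measure_eq_zero hout hμ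
  have hcover : {z : ℂ | ‖z‖ ≤ α} ∪ {z : ℂ | α < ‖z‖} = Set.univ := by
    ext z
    simpa using le_or_gt ‖z‖ α
  have hdisj : Disjoint {z : ℂ | ‖z‖ ≤ α} {z : ℂ | α < ‖z‖} :=
    Set.disjoint_left.mpr fun z (h : ‖z‖ ≤ α) => not_lt.mpr h
  refine ⟨hEout, ?_⟩
  calc f = E Set.univ f := by rw [hE.univ]; rfl
    _ = E {z : ℂ | ‖z‖ ≤ α} f + E {z : ℂ | α < ‖z‖} f := by
        rw [← hcover, hE.apply_union hin hout hdisj]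
    _ = E {z : ℂ | ‖z‖ ≤ α} f := by rw [hEout, add_zero]

/-- If `‖Aⁿ f‖ ≤ c αⁿ` for all `n`, then `E_A({|λ| > α}) f = 0`,
i.e. `f = E_A({|λ| ≤ α}) f`. -/
theorem spectral_projection_of_exp_type (A : X →L[ℂ] X) (hA : IsStarNormal A)
    (E : Set ℂ → X →L[ℂ] X) (μ : X → Measure ℂ) (hE : IsSpectralMeasureOf A E μ)
    (f : X) (c α : ℝ) (hc : 0 < c) (hα : 0 < α)
    (hf : ∀ n : ℕ, ‖(A ^ n) f‖ ≤ c * α ^ n) :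
    E {z : ℂ | α < ‖z‖} f = 0 ∧ f = E {z : ℂ | ‖z‖ ≤ α} f :=
  spectral_projection_of_exp_type_general A E μ hE f c α hα hf
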